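/- Let T = [0,1] with Lebesgue measure λ, let (Θ, 𝒜, π) be a probability space, let θ ↦ S_θ assign to each θ ∈ Θ a measurable subset of [0,1] such that (t,θ) ↦ 𝟙{t ∈ S_θ} is jointly measurable, let α(t) = ∫_Θ 𝟙{t ∈ S_θ} dπ(θ), and for γ ∈ [0,1] let L_γ(S, S') = γ·λ(S \ S') + (1−γ)·λ(S' \ S). Then the level set S* = {t ∈ [0,1] : α(t) ≥ γ} minimizes the expected loss: for every measurable set S ⊆ [0,1], ∫_Θ L_γ(S*, S_θ) dπ(θ) ≤ ∫_Θ L_γ(S, S_θ) dπ(θ). -/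

import Mathlib

open MeasureTheory

/-- Lebesgue measure on `[0,1]`, as the restriction of `volume` to `Set.Icc 0 1`. -/
noncomputable def lam : Measure ℝ := volume.restrict (Set.Icc (0:ℝ) 1)

/-- The loss `L_γ(S, S') = γ·λ(S \ S') + (1−γ)·λ(S' \ S)`. -/
noncomputable def Lloss (γ : ℝ) (S S' : Set ℝ) : ℝ :=
  γ * (lam (S \ S')).toReal + (1 - γ) * (lam (S' \ S)).toReal

/-- `α(t) = ∫_Θ 𝟙{t ∈ S_θ} dπ(θ)`. -/
noncomputable def alphaFn {Θ : Type*} [MeasurableSpace Θ] (π : Measure Θ)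
    (S : Θ → Set ℝ) (t : ℝ) : ℝ :=
  ∫ θ, Set.indicator (S θ) (fun _ => (1:ℝ)) t ∂π

/-! Since `L_γ(U, S_θ) = γ λ(U) + (1 − γ) λ(S_θ) − λ(U ∩ S_θ)` and, by Fubini,
`∫ λ(U ∩ S_θ) dπ = ∫_U α dλ`, the expected loss of `U` is a constant plus `∫_U (γ − α) dλ`.
This integral is smallest when `U` is exactly the set where the integrand is nonpositive,
i.e. the level set `{α ≥ γ}`. -/

instance : IsProbabilityMeasure lam :=
  ⟨by simp [lam]⟩

lemma integrable_measureReal_comp {Θ X : Type*} [MeasurableSpace Θ] [MeasurableSpace X]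
    {μ : Measure X} [IsZeroOrProbabilityMeasure μ] {π : Measure Θ} [IsFiniteMeasure π]
    {s : Θ → Set X} (hs : Measurable fun θ => μ (s θ)) :
    Integrable (fun θ => μ.real (s θ)) π :=
  .of_bound hs.ennreal_toReal.aestronglyMeasurable 1 <| ae_of_all _ fun θ => by
    simp [abs_of_nonneg, measureReal_le_one]

section JointlyMeasurable

variable {X Θ : Type*} [MeasurableSpace X] [MeasurableSpace Θ] {S : Θ → Set X}

lemma measurableSet_setOf_mem_of_prod (hS : MeasurableSet {p : X × Θ | p.1 ∈ S p.2}) (t : X) :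
    MeasurableSet {θ | t ∈ S θ} :=
  hS.preimage measurable_prodMk_left

lemma measurableSet_of_prod (hS : MeasurableSet {p : X × Θ | p.1 ∈ S p.2}) (θ : Θ) :
    MeasurableSet (S θ) :=
  hS.preimage measurable_prodMk_right

lemma lintegral_measure_inter_eq_setLIntegral (hS : MeasurableSet {p : X × Θ | p.1 ∈ S p.2})
    (μ : Measure X) (π : Measure Θ) [SFinite μ] [SFinite π] {U : Set X} (hU : MeasurableSet U) :
    ∫⁻ θ, μ (U ∩ S θ) ∂π = ∫⁻ t in U, π {θ | t ∈ S θ} ∂μ := by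
  have hE : MeasurableSet {p : X × Θ | p.1 ∈ U ∩ S p.2} :=
    (hU.preimage measurable_fst).inter hS
  have hslice (t : X) :
      π (Prod.mk t ⁻¹' {p : X × Θ | p.1 ∈ U ∩ S p.2}) =
        U.indicator (fun t => π {θ | t ∈ S θ}) t := by
    by_cases ht : t ∈ U <;> simp [ht, Set.preimage]
  rw [← lintegral_indicator hU, ← lintegral_congr hslice, ← Measure.prod_apply hE,
    Measure.prod_apply_symm hE]
  rfl

lemma integral_measureReal_inter_eq_setIntegral (hS : MeasurableSet {p : X × Θ | p.1 ∈ S p.2})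
    (μ : Measure X) (π : Measure Θ) [IsFiniteMeasure μ] [IsFiniteMeasure π] {U : Set X}
    (hU : MeasurableSet U) :
    ∫ θ, μ.real (U ∩ S θ) ∂π = ∫ t in U, π.real {θ | t ∈ S θ} ∂μ := by
  have hE : MeasurableSet {p : X × Θ | p.1 ∈ U ∩ S p.2} :=
    (hU.preimage measurable_fst).inter hS
  have hleft : Measurable fun θ => μ (U ∩ S θ) := measurable_measure_prodMk_right hE
  have hright : Measurable fun t => π {θ | t ∈ S θ} := measurable_measure_prodMk_left hS
  simp only [measureReal_def]
  rw [integral_toReal hleft.aemeasurable (ae_of_all _ fun _ => measure_lt_top _ _),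
    integral_toReal hright.aemeasurable (ae_of_all _ fun _ => measure_lt_top _ _),
    lintegral_measure_inter_eq_setLIntegral hS μ π hU]

end JointlyMeasurable

lemma alphaFn_eq_measureReal {Θ : Type*} [MeasurableSpace Θ] (π : Measure Θ) {S : Θ → Set ℝ}
    (hS : MeasurableSet {p : ℝ × Θ | p.1 ∈ S p.2}) :
    alphaFn π S = fun t => π.real {θ | t ∈ S θ} := by
  ext t
  rw [alphaFn, ← integral_indicator_one (measurableSet_setOf_mem_of_prod hS t)]
  congr with θ

lemma measurable_alphaFn {Θ : Type*} [MeasurableSpace Θ] (π : Measure Θ) [SFinite π]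
    {S : Θ → Set ℝ} (hS : MeasurableSet {p : ℝ × Θ | p.1 ∈ S p.2}) :
    Measurable (alphaFn π S) := by
  rw [alphaFn_eq_measureReal π hS]
  exact (measurable_measure_prodMk_left hS).ennreal_toReal

lemma integrable_alphaFn {Θ : Type*} [MeasurableSpace Θ] (π : Measure Θ) [IsProbabilityMeasure π]
    {S : Θ → Set ℝ} (hS : MeasurableSet {p : ℝ × Θ | p.1 ∈ S p.2}) (μ : Measure ℝ)
    [IsFiniteMeasure μ] : Integrable (alphaFn π S) μ := by
  rw [alphaFn_eq_measureReal π hS]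
  exact integrable_measureReal_comp (measurable_measure_prodMk_left hS)

lemma Lloss_eq (γ : ℝ) {U V : Set ℝ} (hU : MeasurableSet U) (hV : MeasurableSet V) :
    Lloss γ U V = γ * lam.real U + (1 - γ) * lam.real V - lam.real (U ∩ V) := by
  have hUV := measureReal_inter_add_sdiff (μ := lam) (s := U) hV
  have hVU := measureReal_inter_add_sdiff (μ := lam) (s := V) hU
  rw [Set.inter_comm] at hVU
  rw [Lloss, ← measureReal_def, ← measureReal_def]
  linear_combination γ * hUV + (1 - γ) * hVU

lemma integral_Lloss_eq {Θ : Type*} [MeasurableSpace Θ] (π : Measure Θ) [IsProbabilityMeasure π]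
    {S : Θ → Set ℝ} (hS : MeasurableSet {p : ℝ × Θ | p.1 ∈ S p.2}) (γ : ℝ) {U : Set ℝ}
    (hU : MeasurableSet U) :
    ∫ θ, Lloss γ U (S θ) ∂π
      = (1 - γ) * ∫ θ, lam.real (S θ) ∂π + ∫ t in U, (γ - alphaFn π S t) ∂lam := by
  have hS_int : Integrable (fun θ => lam.real (S θ)) π :=
    integrable_measureReal_comp (measurable_measure_prodMk_right hS)
  have hUS_int : Integrable (fun θ => lam.real (U ∩ S θ)) π :=
    integrable_measureReal_comp <| measurable_measure_prodMk_right <|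
      (hU.preimage measurable_fst).inter hS
  calc ∫ θ, Lloss γ U (S θ) ∂π
      = ∫ θ, (γ * lam.real U + (1 - γ) * lam.real (S θ) - lam.real (U ∩ S θ)) ∂π :=
        integral_congr_ae <| ae_of_all _ fun θ => Lloss_eq γ hU (measurableSet_of_prod hS θ)
    _ = γ * lam.real U + (1 - γ) * ∫ θ, lam.real (S θ) ∂π - ∫ t in U, alphaFn π S t ∂lam := by
        have hlinear_int : Integrable (fun θ => γ * lam.real U + (1 - γ) * lam.real (S θ)) π :=
          (integrable_const _).add (hS_int.const_mul _)
        rw [integral_sub hlinear_int hUS_int,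
          integral_add (integrable_const _) (hS_int.const_mul _), integral_const, integral_const_mul,
          integral_measureReal_inter_eq_setIntegral hS lam π hU, alphaFn_eq_measureReal π hS]
        simp
    _ = (1 - γ) * ∫ θ, lam.real (S θ) ∂π + ∫ t in U, (γ - alphaFn π S t) ∂lam := by
        rw [integral_sub (integrable_const _) (integrable_alphaFn π hS _).integrableOn,
          setIntegral_const, smul_eq_mul]
        ring

lemma setIntegral_le_setIntegral_of_nonpos_of_nonneg {α : Type*} [MeasurableSpace α]
    {μ : Measure α} {g : α → ℝ} {M U : Set α} (hg : Integrable g μ) (hM : MeasurableSet M)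
    (hU : MeasurableSet U) (hneg : ∀ t ∈ M, g t ≤ 0) (hpos : ∀ t ∈ U \ M, 0 ≤ g t) :
    ∫ t in M, g t ∂μ ≤ ∫ t in U, g t ∂μ := by
  rw [← integral_inter_add_sdiff hU (hg.integrableOn (s := M)),
    ← integral_inter_add_sdiff hM (hg.integrableOn (s := U)), Set.inter_comm]
  have hMU : ∫ t in M \ U, g t ∂μ ≤ 0 := setIntegral_nonpos (hM.diff hU) fun t ht => hneg t ht.1
  have hUM : 0 ≤ ∫ t in U \ M, g t ∂μ := setIntegral_nonneg (hU.diff hM) hpos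
  linarith

theorem stmt_0_general {Θ : Type*} [MeasurableSpace Θ] (π : Measure Θ) [IsProbabilityMeasure π]
    (S : Θ → Set ℝ) (hjoint : MeasurableSet {p : ℝ × Θ | p.1 ∈ S p.2})
    (γ : ℝ) :
    ∀ T : Set ℝ, MeasurableSet T → T ⊆ Set.Icc 0 1 →
      ∫ θ, Lloss γ {t ∈ Set.Icc (0:ℝ) 1 | γ ≤ alphaFn π S t} (S θ) ∂π
        ≤ ∫ θ, Lloss γ T (S θ) ∂π := by
  intro T hT hT_sub
  have hlevel : MeasurableSet {t ∈ Set.Icc (0:ℝ) 1 | γ ≤ alphaFn π S t} :=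
    measurableSet_Icc.inter (measurableSet_le measurable_const (measurable_alphaFn π hjoint))
  rw [integral_Lloss_eq π hjoint γ hlevel, integral_Lloss_eq π hjoint γ hT]
  apply add_le_add_right
  exact setIntegral_le_setIntegral_of_nonpos_of_nonneg
    ((integrable_const γ).sub (integrable_alphaFn π hjoint lam)) hlevel hT
    (fun t ht => sub_nonpos.2 ht.2)
    (fun t ht => sub_nonneg.2 (le_of_not_ge fun h => ht.2 ⟨hT_sub ht.1, h⟩))

theorem stmt_0 {Θ : Type*} [MeasurableSpace Θ] (π : Measure Θ) [IsProbabilityMeasure π]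
    (S : Θ → Set ℝ) (hsub : ∀ θ, S θ ⊆ Set.Icc 0 1) (hmeas : ∀ θ, MeasurableSet (S θ))
    (hjoint : MeasurableSet {p : ℝ × Θ | p.1 ∈ S p.2})
    (γ : ℝ) (hγ : γ ∈ Set.Icc (0:ℝ) 1) :
    ∀ T : Set ℝ, MeasurableSet T → T ⊆ Set.Icc 0 1 →
      ∫ θ, Lloss γ {t ∈ Set.Icc (0:ℝ) 1 | γ ≤ alphaFn π S t} (S θ) ∂π
        ≤ ∫ θ, Lloss γ T (S θ) ∂π :=
  stmt_0_general π S hjoint γ
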